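/- arXiv:2004.06285 — 5 statements merged into one kernel-verified Lean document; each statement's English description precedes it below -/
import Mathlib

section
/- Let G be a nontrivial connected simple graph of order n with rvd(G) = k, and let V_1, V_2, …, V_k be the color classes of a rainbow vertex-disconnection coloring of G that uses exactly k colors. Then for every i ∈ {1,…,k} with |V_i| ≥ 2, the sum of the degrees in G of the vertices of V_i is at most n + C(|V_i|, 2), where C(m,2) = m(m−1)/2. -/
open SimpleGraph

/-- The graph obtained from `G` by removing (isolating) the vertices of `S`.
Since in our uses the endpoints of interest never lie in `S`, reachability
between them in this graph agrees with reachability in `G - S`. -/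
def SimpleGraph.delVerts {V : Type*} (G : SimpleGraph V) (S : Set V) : SimpleGraph V where
  Adj u v := G.Adj u v ∧ u ∉ S ∧ v ∉ S
  symm := ⟨fun u v h => ⟨h.1.symm, h.2.2, h.2.1⟩⟩
  loopless := ⟨fun v h => G.loopless.irrefl v h.1⟩

/-- `c` is a rainbow vertex-disconnection coloring of `G`: every two distinct
vertices `x, y` admit an `x`-`y` rainbow vertex-cut. -/
def SimpleGraph.IsRVDColoring {V α : Type*} (G : SimpleGraph V) (c : V → α) : Prop :=
  ∀ x y : V, x ≠ y → ∃ S : Set V, x ∉ S ∧ y ∉ S ∧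
    (¬ G.Adj x y → ¬ (G.delVerts S).Reachable x y ∧ Set.InjOn c S) ∧
    (G.Adj x y → ¬ ((G.deleteEdges {s(x, y)}).delVerts S).Reachable x y ∧
      (Set.InjOn c (S ∪ {x}) ∨ Set.InjOn c (S ∪ {y})))

/-- The rainbow vertex-disconnection number of `G`: the minimum number of colors
in a rainbow vertex-disconnection coloring of `G`. -/
noncomputable def SimpleGraph.rvd {V : Type*} (G : SimpleGraph V) : ℕ :=
  sInf {k | ∃ c : V → Fin k, G.IsRVDColoring c}

/-!
Two vertices `x ≠ y` of the same colour have at most one common neighbour: a rainbow cut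
separating two common neighbours `u ≠ w` of `x` and `y` would have to contain both `x` and `y`.
Hence, summing over all vertices `u` the number of neighbours of `u` in the colour class `T`,
`∑_{v ∈ T} deg v = ∑_u |N(u) ∩ T| ≤ ∑_u (1 + C(|N(u) ∩ T|, 2)) ≤ n + C(|T|, 2)`,
because the pairs inside the sets `N(u) ∩ T` are pairwise distinct.
-/

open Finset

namespace Nat

theorem le_one_add_choose_two (m : ℕ) : m ≤ 1 + m.choose 2 := by
  induction m with
  | zero => simp
  | succ m ih =>
    rw [Nat.choose_succ_succ, Nat.choose_one_right]
    omega

end Nat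

namespace Finset

variable {ι α : Type*} [DecidableEq α]

theorem sum_choose_two_card_le_of_pairwise_card_inter_le_one {s : Finset ι} {t : Finset α}
    {A : ι → Finset α} (hA : ∀ i ∈ s, A i ⊆ t)
    (hinter : (s : Set ι).Pairwise fun i j => #(A i ∩ A j) ≤ 1) :
    ∑ i ∈ s, (#(A i)).choose 2 ≤ (#t).choose 2 := by
  have hdisj : (s : Set ι).PairwiseDisjoint fun i => (A i).powersetCard 2 := by
    intro i hi j hj hij
    refine disjoint_left.2 fun p hpi hpj => ?_
    rw [mem_powersetCard] at hpi hpj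
    have : #p ≤ #(A i ∩ A j) := card_le_card (subset_inter hpi.1 hpj.1)
    have := hinter hi hj hij
    omega
  calc ∑ i ∈ s, (#(A i)).choose 2
      = ∑ i ∈ s, #((A i).powersetCard 2) := by simp only [card_powersetCard]
    _ = #(s.biUnion fun i => (A i).powersetCard 2) := (card_biUnion hdisj).symm
    _ ≤ #(t.powersetCard 2) := card_le_card <| biUnion_subset.2 fun i hi =>
          powersetCard_mono (hA i hi)
    _ = (#t).choose 2 := card_powersetCard 2 t

theorem sum_card_le_card_add_choose_two_of_pairwise_card_inter_le_one {s : Finset ι}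
    {t : Finset α} {A : ι → Finset α} (hA : ∀ i ∈ s, A i ⊆ t)
    (hinter : (s : Set ι).Pairwise fun i j => #(A i ∩ A j) ≤ 1) :
    ∑ i ∈ s, #(A i) ≤ #s + (#t).choose 2 :=
  calc ∑ i ∈ s, #(A i)
      ≤ ∑ i ∈ s, (1 + (#(A i)).choose 2) := sum_le_sum fun i _ => Nat.le_one_add_choose_two _
    _ = #s + ∑ i ∈ s, (#(A i)).choose 2 := by rw [sum_add_distrib, card_eq_sum_ones]
    _ ≤ #s + (#t).choose 2 :=
        Nat.add_le_add_left (sum_choose_two_card_le_of_pairwise_card_inter_le_one hA hinter) _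

end Finset

namespace SimpleGraph

variable {V α : Type*} {G : SimpleGraph V}

theorem commonNeighbors_subset_of_not_reachable_delVerts {S : Set V} {u w : V} (hu : u ∉ S)
    (hw : w ∉ S) (h : ¬ (G.delVerts S).Reachable u w) : G.commonNeighbors u w ⊆ S := by
  intro x hx
  by_contra hxS
  rw [mem_commonNeighbors] at hx
  exact h <| (Adj.reachable (⟨hx.1, hu, hxS⟩ : (G.delVerts S).Adj u x)).trans
    (Adj.reachable (⟨hx.2.symm, hxS, hw⟩ : (G.delVerts S).Adj x w))

theorem commonNeighbors_subset_deleteEdges (u w : V) :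
    G.commonNeighbors u w ⊆ (G.deleteEdges {s(u, w)}).commonNeighbors u w := by
  intro x hx
  rw [mem_commonNeighbors] at hx ⊢
  have hxu : x ≠ u := hx.1.ne'
  have hxw : x ≠ w := hx.2.ne'
  simp only [deleteEdges_adj, Set.mem_singleton_iff, Sym2.eq_iff]
  tauto

theorem IsRVDColoring.injOn_commonNeighbors {c : V → α} (hc : G.IsRVDColoring c) {u w : V}
    (huw : u ≠ w) : Set.InjOn c (G.commonNeighbors u w) := by
  obtain ⟨S, hu, hw, hnonadj, hadj⟩ := hc u w huw
  by_cases hA : G.Adj u w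
  · obtain ⟨hcut, hrainbow⟩ := hadj hA
    have hS : Set.InjOn c S := hrainbow.elim (·.mono Set.subset_union_left)
      (·.mono Set.subset_union_left)
    exact hS.mono <| (commonNeighbors_subset_deleteEdges u w).trans <|
      commonNeighbors_subset_of_not_reachable_delVerts hu hw hcut
  · obtain ⟨hcut, hS⟩ := hnonadj hA
    exact hS.mono (commonNeighbors_subset_of_not_reachable_delVerts hu hw hcut)

end SimpleGraph

theorem sum_degree_colorClass_le_general {V : Type*} [Fintype V]
    (G : SimpleGraph V) [DecidableRel G.Adj] (k : ℕ)
    (c : V → Fin k) (hc : G.IsRVDColoring c) (i : Fin k) :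
    ∑ v ∈ Finset.univ.filter (fun v => c v = i), G.degree v ≤
      Fintype.card V + ((Finset.univ.filter fun v => c v = i).card).choose 2 := by
  classical
  set T := Finset.univ.filter fun v => c v = i
  have hdegree : ∑ v ∈ T, G.degree v = ∑ u, #(T.filter (G.Adj · u)) := by
    simp only [← card_neighborFinset_eq_degree, neighborFinset_eq_filter]
    exact sum_card_bipartiteAbove_eq_sum_card_bipartiteBelow G.Adj
  rw [hdegree, ← Finset.card_univ]
  refine sum_card_le_card_add_choose_two_of_pairwise_card_inter_le_one
    (fun u _ => Finset.filter_subset _ _) fun u _ w _ huw => Finset.card_le_one.2 ?_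
  intro x hx y hy
  simp only [T, Finset.mem_inter, Finset.mem_filter, Finset.mem_univ, true_and] at hx hy
  exact hc.injOn_commonNeighbors huw (G.mem_commonNeighbors.2 ⟨hx.1.2.symm, hx.2.2.symm⟩)
    (G.mem_commonNeighbors.2 ⟨hy.1.2.symm, hy.2.2.symm⟩) (hx.1.1.trans hy.1.1.symm)

/-- Let `G` be a nontrivial connected graph of order `n` with `rvd(G) = k`, and
let the `V i` be the color classes of a rainbow vertex-disconnection coloring of
`G` using exactly `k` colors. Then every color class of size at least `2` has
degree sum at most `n + C(|V i|, 2)`. -/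
theorem sum_degree_colorClass_le {V : Type*} [Fintype V] [DecidableEq V] [Nontrivial V]
    (G : SimpleGraph V) [DecidableRel G.Adj] (hG : G.Connected) (k : ℕ)
    (hk : G.rvd = k) (c : V → Fin k) (hc : G.IsRVDColoring c)
    (hsurj : Function.Surjective c) (i : Fin k)
    (hi : 2 ≤ (Finset.univ.filter fun v => c v = i).card) :
    ∑ v ∈ Finset.univ.filter (fun v => c v = i), G.degree v ≤
      Fintype.card V + ((Finset.univ.filter fun v => c v = i).card).choose 2 :=
  sum_degree_colorClass_le_general G k c hc i
end

section
/- Let G be a nontrivial connected simple graph of order n with rvd(G) = k, let V_1, V_2, …, V_k be the color classes of a rainbow vertex-disconnection coloring of G that uses exactly k colors, and let S be the union of all singleton color classes, i.e. S = {v : v ∈ V_i for some i with |V_i| = 1}. Then any two distinct vertices u, v ∈ S satisfy d_G(u) + d_G(v) ≤ n + k − 2; consequently, if |S| ≥ 2, then the sum of the degrees in G of the vertices of S is at most ((n+k)/2 − 1)·|S|. -/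
open SimpleGraph

/-!
A rainbow cut `X` separating two vertices `u, v` that both carry singleton colors avoids
those two colors, so `|X| ≤ k - 2`. After deleting `X` (and the edge `uv`, if present),
every neighbour of `u` outside `X` lies in the component of `u`, and likewise for `v`; these
components and `X` are disjoint, which gives `d(u) + d(v) ≤ n + |X| ≤ n + k - 2`. Summing
this bound over all ordered pairs of distinct vertices of `S` yields the degree-sum bound.
-/

namespace Finset

theorem two_mul_sum_le_card_mul_of_add_le {ι R : Type*} [CommRing R] [LinearOrder R]
    [IsStrictOrderedRing R] {s : Finset ι} {f : ι → R} {B : R} (hs : 2 ≤ #s)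
    (h : ∀ i ∈ s, ∀ j ∈ s, i ≠ j → f i + f j ≤ B) :
    2 * ∑ i ∈ s, f i ≤ #s * B := by
  classical
  have hs' : (2 : R) ≤ #s := by exact_mod_cast hs
  have hrow : ∀ i ∈ s, ((#s : R) - 2) * f i + ∑ j ∈ s, f j ≤ (#s - 1) * B := by
    intro i hi
    have hle := sum_le_card_nsmul (s.erase i) (fun j => f i + f j) B
      fun j hj => h i hi j (mem_of_mem_erase hj) (ne_of_mem_erase hj).symm
    rw [sum_add_distrib, sum_const, sum_erase_eq_sub hi, card_erase_of_mem hi, nsmul_eq_mul,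
      nsmul_eq_mul, Nat.cast_pred (by omega)] at hle
    linarith
  have htotal := sum_le_sum hrow
  rw [sum_add_distrib, ← mul_sum, sum_const, sum_const, nsmul_eq_mul, nsmul_eq_mul] at htotal
  have hpos : (0 : R) < #s - 1 := by linarith
  refine le_of_mul_le_mul_left ?_ hpos
  linarith

end Finset

namespace SimpleGraph

variable {V : Type*} {G : SimpleGraph V} {X : Set V} {u v w : V}

theorem notMem_of_reachable_delVerts (h : (G.delVerts X).Reachable u w) (hu : u ∉ X) :
    w ∉ X := by
  obtain ⟨p⟩ := h
  induction p with
  | nil => exact hu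
  | cons hadj _ ih => exact ih hadj.2.2

theorem neighborSet_subset_reachable_delVerts_union (hu : u ∉ X) :
    G.neighborSet u ⊆ {w | (G.delVerts X).Reachable u w} \ {u} ∪ X := by
  intro w hw
  by_cases hwX : w ∈ X
  · exact Or.inr hwX
  · exact Or.inl ⟨Adj.reachable ⟨hw, hu, hwX⟩, hw.ne'⟩

theorem ncard_neighborSet_add_one_le [Finite V] (hu : u ∉ X) :
    (G.neighborSet u).ncard + 1 ≤ {w | (G.delVerts X).Reachable u w}.ncard + X.ncard := by
  have hsub := Set.ncard_le_ncard (neighborSet_subset_reachable_delVerts_union (G := G) hu)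
  have hunion := Set.ncard_union_le ({w | (G.delVerts X).Reachable u w} \ {u}) X
  have hdiff := Set.ncard_sdiff_singleton_add_one
    (show u ∈ {w | (G.delVerts X).Reachable u w} from Reachable.refl u)
  omega

theorem ncard_neighborSet_add_ncard_neighborSet_le_of_not_reachable_delVerts [Finite V]
    (hu : u ∉ X) (hv : v ∉ X) (huv : ¬ (G.delVerts X).Reachable u v) :
    (G.neighborSet u).ncard + (G.neighborSet v).ncard + 2 ≤ Nat.card V + X.ncard := by
  set Cu := {w | (G.delVerts X).Reachable u w}
  set Cv := {w | (G.delVerts X).Reachable v w}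
  have hCuv : Disjoint Cu Cv :=
    Set.disjoint_left.2 fun _ hwu hwv => huv (hwu.trans hwv.symm)
  have hCX : Disjoint (Cu ∪ Cv) X := Set.disjoint_left.2 fun _ hw hwX =>
    hw.elim (notMem_of_reachable_delVerts · hu hwX) (notMem_of_reachable_delVerts · hv hwX)
  have hcard := Set.ncard_le_card (Cu ∪ Cv ∪ X)
  rw [Set.ncard_union_eq hCX, Set.ncard_union_eq hCuv] at hcard
  have hNu : _ ≤ Cu.ncard + X.ncard := ncard_neighborSet_add_one_le hu
  have hNv : _ ≤ Cv.ncard + X.ncard := ncard_neighborSet_add_one_le hv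
  omega

theorem neighborSet_subset_insert_neighborSet_deleteEdges (u v : V) :
    G.neighborSet u ⊆ insert v ((G.deleteEdges {s(u, v)}).neighborSet u) := by
  intro w hw
  by_cases hwv : w = v
  · exact Or.inl hwv
  · exact Or.inr (deleteEdges_adj.2 ⟨hw, fun h => hwv (Sym2.congr_right.1 h)⟩)

theorem ncard_neighborSet_eq_degree [Fintype V] [DecidableRel G.Adj] (v : V) :
    (G.neighborSet v).ncard = G.degree v := by
  rw [← Nat.card_coe_set_eq, Nat.card_eq_fintype_card, card_neighborSet_eq_degree]

theorem IsRVDColoring.exists_injOn_not_reachable {α : Type*} {c : V → α}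
    (hc : G.IsRVDColoring c) (huv : u ≠ v) :
    ∃ X : Set V, u ∉ X ∧ v ∉ X ∧ Set.InjOn c X ∧
      ¬ ((G.deleteEdges {s(u, v)}).delVerts X).Reachable u v := by
  obtain ⟨X, hu, hv, hnonadj, hadj⟩ := hc u v huv
  by_cases h : G.Adj u v
  · obtain ⟨hcut, hinj⟩ := hadj h
    exact ⟨X, hu, hv, hinj.elim (·.mono Set.subset_union_left) (·.mono Set.subset_union_left),
      hcut⟩
  · obtain ⟨hcut, hinj⟩ := hnonadj h
    have hdel : G.deleteEdges {s(u, v)} = G := deleteEdges_eq_self.2 (by simpa using h)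
    rw [hdel]
    exact ⟨X, hu, hv, hinj, hcut⟩

theorem ncard_add_two_le_of_injOn {α : Type*} [Finite α] {c : V → α} (hX : Set.InjOn c X)
    (huv : c u ≠ c v) (hu : c u ∉ c '' X) (hv : c v ∉ c '' X) :
    X.ncard + 2 ≤ Nat.card α := by
  have hv' : c v ∉ insert (c u) (c '' X) := by simp [hv, huv.symm]
  have hcard := Set.ncard_le_card (insert (c v) (insert (c u) (c '' X)))
  rwa [Set.ncard_insert_of_notMem hv', Set.ncard_insert_of_notMem hu, hX.ncard_image] at hcard

theorem IsRVDColoring.degree_add_degree_add_two_le [Fintype V] [DecidableRel G.Adj]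
    {α : Type*} [Finite α] {c : V → α} (hc : G.IsRVDColoring c) (huv : u ≠ v)
    (hu : ∀ w, c w = c u → w = u) (hv : ∀ w, c w = c v → w = v) :
    G.degree u + G.degree v + 2 ≤ Fintype.card V + Nat.card α := by
  obtain ⟨X, huX, hvX, hinj, hcut⟩ := hc.exists_injOn_not_reachable huv
  have hcolors := ncard_add_two_le_of_injOn hinj (fun h => huv (hv u h))
    (fun ⟨w, hw, hwu⟩ => huX (hu w hwu ▸ hw)) (fun ⟨w, hw, hwv⟩ => hvX (hv w hwv ▸ hw))
  have hdeg := ncard_neighborSet_add_ncard_neighborSet_le_of_not_reachable_delVerts huX hvX hcut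
  have hNu := (Set.ncard_le_ncard (neighborSet_subset_insert_neighborSet_deleteEdges (G := G)
    u v)).trans (Set.ncard_insert_le _ _)
  have hNv := (Set.ncard_le_ncard (neighborSet_subset_insert_neighborSet_deleteEdges (G := G)
    v u)).trans (Set.ncard_insert_le _ _)
  rw [Sym2.eq_swap] at hNv
  rw [ncard_neighborSet_eq_degree] at hNu hNv
  rw [Nat.card_eq_fintype_card] at hdeg
  omega

end SimpleGraph

theorem sum_degree_singletonClasses_le_general {V : Type*} [Fintype V]
    (G : SimpleGraph V) [DecidableRel G.Adj] (k : ℕ)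
    (c : V → Fin k) (hc : G.IsRVDColoring c)
    (S : Finset V)
    (hS : S = Finset.univ.filter fun v => (Finset.univ.filter fun w => c w = c v).card = 1) :
    (∀ u ∈ S, ∀ v ∈ S, u ≠ v →
        (G.degree u : ℤ) + G.degree v ≤ (Fintype.card V : ℤ) + k - 2) ∧
      (2 ≤ S.card →
        (∑ v ∈ S, (G.degree v : ℝ)) ≤
          (((Fintype.card V : ℝ) + k) / 2 - 1) * S.card) := by
  have hsingleton : ∀ u ∈ S, ∀ w, c w = c u → w = u := by
    intro u hu w hw
    rw [hS, Finset.mem_filter] at hu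
    exact Finset.card_le_one.1 hu.2.le w (by simpa using hw) u (by simp)
  have hpair : ∀ u ∈ S, ∀ v ∈ S, u ≠ v → G.degree u + G.degree v + 2 ≤ Fintype.card V + k :=
    fun u hu v hv huv => by
      simpa using hc.degree_add_degree_add_two_le huv (hsingleton u hu) (hsingleton v hv)
  refine ⟨fun u hu v hv huv => by have := hpair u hu v hv huv; omega, fun hS2 => ?_⟩
  have hsum := Finset.two_mul_sum_le_card_mul_of_add_le (f := fun v => (G.degree v : ℝ))
    (B := (Fintype.card V : ℝ) + k - 2) hS2 fun u hu v hv huv => by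
      have hle : ((G.degree u + G.degree v + 2 : ℕ) : ℝ) ≤ (Fintype.card V + k : ℕ) := by
        exact_mod_cast hpair u hu v hv huv
      push_cast at hle
      linarith
  linarith

/-- Let `G` be a nontrivial connected graph of order `n` with `rvd(G) = k`, let
the color classes of a rainbow vertex-disconnection coloring with exactly `k`
colors be given, and let `S` be the union of the singleton color classes. Then
any two distinct vertices `u, v ∈ S` satisfy `d(u) + d(v) ≤ n + k - 2`, and if
`|S| ≥ 2` then `∑_{v ∈ S} d(v) ≤ ((n+k)/2 - 1)·|S|`. -/
theorem sum_degree_singletonClasses_le {V : Type*} [Fintype V] [DecidableEq V] [Nontrivial V]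
    (G : SimpleGraph V) [DecidableRel G.Adj] (hG : G.Connected) (k : ℕ)
    (hk : G.rvd = k) (c : V → Fin k) (hc : G.IsRVDColoring c)
    (hsurj : Function.Surjective c)
    (S : Finset V)
    (hS : S = Finset.univ.filter fun v => (Finset.univ.filter fun w => c w = c v).card = 1) :
    (∀ u ∈ S, ∀ v ∈ S, u ≠ v →
        (G.degree u : ℤ) + G.degree v ≤ (Fintype.card V : ℤ) + k - 2) ∧
      (2 ≤ S.card →
        (∑ v ∈ S, (G.degree v : ℝ)) ≤
          (((Fintype.card V : ℝ) + k) / 2 - 1) * S.card) :=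
  sum_degree_singletonClasses_le_general G k c hc S hS
end

section
/- Let G be a connected simple graph of order n ≥ 3 with rvd(G) = n−1. Then |E(G)| ≤ n(n−1)/2 − n + 3. -/
open SimpleGraph

/-!
If `G` has more than `n(n-1)/2 - n + 3` edges, its complement has at most `n - 4` edges. Then any
two vertices `u ≠ v` have two adjacent common neighbours `x, y`: otherwise, fixing a common
neighbour `w₀` of `u, v` (or any third vertex if there is none), each of the `n - 3` remaining
vertices `w` misses one of `u, v, w₀`, which gives `n - 3` distinct non-edges `s(w, ·)`.
Every `x`–`y` vertex-cut of `G - xy` contains all common neighbours of `x` and `y`, in particular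
`u` and `v`, so a rainbow cut forces `c u ≠ c v`. Hence every rainbow vertex-disconnection
coloring is injective and `rvd G ≥ n`.
-/

open Finset

theorem Sym2.injOn_mk_of_forall_notMem {α : Type*} {s : Set α} {g : α → α}
    (hg : ∀ a ∈ s, g a ∉ s) : Set.InjOn (fun a => s(a, g a)) s := by
  intro a ha b hb hab
  rcases Sym2.eq_iff.1 hab with ⟨rfl, -⟩ | ⟨rfl, -⟩
  · rfl
  · exact absurd ha (hg b hb)

namespace SimpleGraph

variable {V : Type*}

theorem card_edgeFinset_add_card_edgeFinset_compl [Fintype V] [DecidableEq V]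
    (G : SimpleGraph V) [DecidableRel G.Adj] :
    #G.edgeFinset + #Gᶜ.edgeFinset = (Fintype.card V).choose 2 := by
  rw [← Finset.card_union_of_disjoint (disjoint_edgeFinset.2 disjoint_compl_right),
    ← edgeFinset_sup, ← card_edgeFinset_top_eq_card_choose_two]
  congr 1
  exact Set.toFinset_congr (by rw [sup_compl_eq_top])

theorem card_le_card_edgeFinset_compl_add_three [Fintype V] [DecidableEq V]
    (G : SimpleGraph V) [DecidableRel G.Adj] {u v w₀ : V} (huv : u ≠ v) (hu : w₀ ≠ u)
    (hv : w₀ ≠ v) (hw₀ : ∀ w ∈ G.commonNeighbors u v, ¬G.Adj w₀ w) :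
    Fintype.card V ≤ #Gᶜ.edgeFinset + 3 := by
  set T : Finset V := {u, v, w₀}
  have hT : #T = 3 := Finset.card_eq_three.2 ⟨u, v, w₀, huv, hu.symm, hv.symm, rfl⟩
  let g : V → V := fun w => if G.Adj u w then (if G.Adj v w then w₀ else v) else u
  have hgT : ∀ w, g w ∈ T := fun w => by simp only [g, T]; split_ifs <;> simp
  have hg : ∀ w ∈ Tᶜ, Gᶜ.Adj (g w) w := by
    intro w hw
    have hw : w ≠ u ∧ w ≠ v ∧ w ≠ w₀ := by simpa [T] using hw
    simp only [g, compl_adj]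
    split_ifs with h₁ h₂
    · exact ⟨hw.2.2.symm, hw₀ w ((G.mem_commonNeighbors).2 ⟨h₁, h₂⟩)⟩
    · exact ⟨hw.2.1.symm, h₂⟩
    · exact ⟨hw.1.symm, h₁⟩
  have hmaps : Set.MapsTo (fun w => s(w, g w)) (Tᶜ : Finset V) Gᶜ.edgeFinset :=
    fun w hw => by simpa using (hg w hw).symm
  have hinj : Set.InjOn (fun w => s(w, g w)) (Tᶜ : Finset V) :=
    Sym2.injOn_mk_of_forall_notMem fun w _ => by simpa using hgT w
  have := Finset.card_le_card_of_injOn _ hmaps hinj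
  have := Finset.card_le_univ T
  rw [Finset.card_compl] at *
  omega

theorem exists_adj_of_card_edgeFinset_compl_add_four_le [Fintype V] [DecidableEq V]
    (G : SimpleGraph V) [DecidableRel G.Adj] (hcompl : #Gᶜ.edgeFinset + 4 ≤ Fintype.card V)
    {u v : V} (huv : u ≠ v) :
    ∃ x y, G.Adj x y ∧ x ∈ G.commonNeighbors u v ∧ y ∈ G.commonNeighbors u v := by
  by_contra! h
  obtain ⟨w₀, hu, hv, hw₀⟩ :
      ∃ w₀, w₀ ≠ u ∧ w₀ ≠ v ∧ ∀ w ∈ G.commonNeighbors u v, ¬G.Adj w₀ w := by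
    rcases (G.commonNeighbors u v).eq_empty_or_nonempty with hcn | ⟨w₀, hw₀⟩
    · have : #({u, v} : Finset V) < #(Finset.univ : Finset V) := by
        rw [Finset.card_pair huv, Finset.card_univ]; omega
      obtain ⟨w₀, -, hw₀⟩ := Finset.exists_mem_notMem_of_card_lt_card this
      simp only [Finset.mem_insert, Finset.mem_singleton, not_or] at hw₀
      exact ⟨w₀, hw₀.1, hw₀.2, by simp [hcn]⟩
    · obtain ⟨hu, hv⟩ := (G.mem_commonNeighbors).1 hw₀
      exact ⟨w₀, hu.ne', hv.ne', fun w hw hadj => h w₀ w hadj hw₀ hw⟩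
  have := G.card_le_card_edgeFinset_compl_add_three huv hu hv hw₀
  omega

theorem mem_of_adj_of_not_reachable_delVerts {H : SimpleGraph V} {S : Set V} {x y w : V}
    (hx : x ∉ S) (hy : y ∉ S) (hxy : ¬(H.delVerts S).Reachable x y) (hxw : H.Adj x w)
    (hwy : H.Adj w y) : w ∈ S := by
  by_contra hw
  have hxw' : (H.delVerts S).Adj x w := ⟨hxw, hx, hw⟩
  have hwy' : (H.delVerts S).Adj w y := ⟨hwy, hw, hy⟩
  exact hxy (hxw'.reachable.trans hwy'.reachable)

theorem IsRVDColoring.injective [Fintype V] [DecidableEq V] {G : SimpleGraph V}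
    [DecidableRel G.Adj] (hcompl : #Gᶜ.edgeFinset + 4 ≤ Fintype.card V) {α : Type*}
    {c : V → α} (hc : G.IsRVDColoring c) : Function.Injective c := by
  intro u v hcuv
  by_contra huv
  obtain ⟨x, y, hxy, hx, hy⟩ := G.exists_adj_of_card_edgeFinset_compl_add_four_le hcompl huv
  obtain ⟨S, hxS, hyS, -, hcut⟩ := hc x y hxy.ne
  obtain ⟨hsep, hrainbow⟩ := hcut hxy
  have hmem : ∀ w, G.Adj x w → G.Adj w y → w ∈ S := fun w hxw hwy =>
    mem_of_adj_of_not_reachable_delVerts hxS hyS hsep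
      (deleteEdges_adj.2 ⟨hxw, by rw [Set.mem_singleton_iff, Sym2.congr_right]; exact hwy.ne⟩)
      (deleteEdges_adj.2 ⟨hwy, by rw [Set.mem_singleton_iff, Sym2.congr_left]; exact hxw.ne'⟩)
  obtain ⟨hux, hvx⟩ := (G.mem_commonNeighbors).1 hx
  obtain ⟨huy, hvy⟩ := (G.mem_commonNeighbors).1 hy
  have huS : u ∈ S := hmem u hux.symm huy
  have hvS : v ∈ S := hmem v hvx.symm hvy
  rcases hrainbow with hinj | hinj <;>
    exact huv (hinj (Or.inl huS) (Or.inl hvS) hcuv)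

theorem not_reachable_delVerts_compl_pair {H : SimpleGraph V} {x y : V} (hxy : x ≠ y)
    (h : ¬H.Adj x y) : ¬(H.delVerts {x, y}ᶜ).Reachable x y := by
  rintro ⟨p⟩
  obtain ⟨hadj, -, hsnd⟩ := p.adj_snd (Walk.not_nil_of_ne hxy)
  rcases not_not.1 hsnd with hx | hy
  · exact hadj.ne hx.symm
  · exact h (hy ▸ hadj)

theorem isRVDColoring_of_injective (G : SimpleGraph V) {α : Type*} {c : V → α}
    (hc : Function.Injective c) : G.IsRVDColoring c := fun x y hxy =>
  ⟨{x, y}ᶜ, by simp, by simp,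
    fun h => ⟨not_reachable_delVerts_compl_pair hxy h, hc.injOn⟩,
    fun _ => ⟨not_reachable_delVerts_compl_pair hxy (by simp [deleteEdges_adj]),
      Or.inl hc.injOn⟩⟩

theorem card_le_rvd [Fintype V] [DecidableEq V] (G : SimpleGraph V) [DecidableRel G.Adj]
    (hcompl : #Gᶜ.edgeFinset + 4 ≤ Fintype.card V) : Fintype.card V ≤ G.rvd := by
  obtain ⟨c, hc⟩ := Nat.sInf_mem (s := {k | ∃ c : V → Fin k, G.IsRVDColoring c})
    ⟨_, Fintype.equivFin V, G.isRVDColoring_of_injective (Fintype.equivFin V).injective⟩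
  exact (Fintype.card_le_of_injective c (hc.injective hcompl)).trans_eq (Fintype.card_fin _)

end SimpleGraph

theorem edge_card_le_of_rvd_eq_card_sub_one_general {V : Type*} [Fintype V] [DecidableEq V]
    (G : SimpleGraph V) [DecidableRel G.Adj]
    (hrvd : G.rvd = Fintype.card V - 1) :
    (G.edgeFinset.card : ℤ) ≤
      (Fintype.card V : ℤ) * (Fintype.card V - 1) / 2 - Fintype.card V + 3 := by
  by_contra! hlt
  have hchoose :
      ((Fintype.card V).choose 2 : ℤ) = (Fintype.card V : ℤ) * (Fintype.card V - 1) / 2 := by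
    rcases Fintype.card V with _ | n
    · simp
    · rw [Nat.choose_two_right]; push_cast; ring_nf
  have hsum := G.card_edgeFinset_add_card_edgeFinset_compl
  have hcompl : #Gᶜ.edgeFinset + 4 ≤ Fintype.card V := by
    zify at hsum; omega
  have := G.card_le_rvd hcompl
  omega

/-- Let `G` be a connected graph of order `n ≥ 3` with `rvd(G) = n - 1`.
Then `|E(G)| ≤ n(n-1)/2 - n + 3`. -/
theorem edge_card_le_of_rvd_eq_card_sub_one {V : Type*} [Fintype V] [DecidableEq V]
    (G : SimpleGraph V) [DecidableRel G.Adj] (hG : G.Connected)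
    (hn : 3 ≤ Fintype.card V) (hrvd : G.rvd = Fintype.card V - 1) :
    (G.edgeFinset.card : ℤ) ≤
      (Fintype.card V : ℤ) * (Fintype.card V - 1) / 2 - Fintype.card V + 3 :=
  edge_card_le_of_rvd_eq_card_sub_one_general G hrvd
end

section
/- For every n ≥ 3, let H be the graph on vertex set {v_1, …, v_n} obtained from the complete graph K_n by deleting the edges v_n v_i for all i ∈ {1, …, n−3}. Then H is connected, rvd(H) = n−1, and |E(H)| = n(n−1)/2 − n + 3. Hence the bound |E(G)| ≤ n(n−1)/2 − n + 3 for connected graphs of order n ≥ 3 with rvd(G) = n−1 is attained. -/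
open SimpleGraph

/-- The graph on vertex set `{v_1, …, v_n}` (indexed by `Fin n`, with `v_i`
corresponding to index `i - 1`) obtained from `K_n` by deleting the edges
`v_n v_i` for all `i ∈ {1, …, n-3}`. -/
def extremalGraph (n : ℕ) : SimpleGraph (Fin n) where
  Adj u v := u ≠ v ∧
    ¬(((u : ℕ) = n - 1 ∧ (v : ℕ) < n - 3) ∨ ((v : ℕ) = n - 1 ∧ (u : ℕ) < n - 3))
  symm := ⟨fun u v h => ⟨h.1.symm, fun hc => h.2 hc.symm⟩⟩
  loopless := ⟨fun v h => h.1 rfl⟩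

instance (n : ℕ) : DecidableRel (extremalGraph n).Adj := fun u v =>
  inferInstanceAs (Decidable (u ≠ v ∧
    ¬(((u : ℕ) = n - 1 ∧ (v : ℕ) < n - 3) ∨ ((v : ℕ) = n - 1 ∧ (u : ℕ) < n - 3))))

/-! The vertices `v_{n-2}` and `v_{n-1}` are universal, so `H` is connected, and a
`v_{n-2}`-`v_{n-1}` cut must contain every other vertex; since it is rainbow together with one of
its ends, `n - 1` colours are needed. Conversely, giving `v_{n-1}` and `v_n` one colour and all
other vertices distinct colours works: in every pair `x, y` one can cut `x` off by its other
neighbours, choosing `x` so that `N(x) ∪ {y}` avoids `v_{n-1}` or `v_n`. Finally `v_n` has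
degree 2 and `H - v_n = K_{n-1}`. -/

open Finset

namespace SimpleGraph

variable {V α : Type*} {G : SimpleGraph V} {c : V → α} {x y : V}

lemma IsIsolated.not_reachable (hx : G.IsIsolated x) (hxy : x ≠ y) : ¬ G.Reachable x y := by
  rintro ⟨_ | ⟨hadj, _⟩⟩
  exacts [hxy rfl, hx _ hadj]

/-- `G.IsRVDColoring c` unfolds to `∀ x y, x ≠ y → G.HasRainbowCut c x y`. -/
def HasRainbowCut (G : SimpleGraph V) (c : V → α) (x y : V) : Prop :=
  ∃ S : Set V, x ∉ S ∧ y ∉ S ∧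
    (¬ G.Adj x y → ¬ (G.delVerts S).Reachable x y ∧ Set.InjOn c S) ∧
    (G.Adj x y → ¬ ((G.deleteEdges {s(x, y)}).delVerts S).Reachable x y ∧
      (Set.InjOn c (S ∪ {x}) ∨ Set.InjOn c (S ∪ {y})))

lemma HasRainbowCut.symm (h : G.HasRainbowCut c x y) : G.HasRainbowCut c y x := by
  obtain ⟨S, hxS, hyS, hnonadj, hadj⟩ := h
  refine ⟨S, hyS, hxS, fun hyx => ?_, fun hyx => ?_⟩
  · obtain ⟨hsep, hinj⟩ := hnonadj fun h => hyx h.symm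
    exact ⟨hsep ∘ Reachable.symm, hinj⟩
  · obtain ⟨hsep, hinj⟩ := hadj hyx.symm
    rw [Sym2.eq_swap] at hsep
    exact ⟨hsep ∘ Reachable.symm, hinj.symm⟩

/-- The cut used is the set of neighbours of `x` other than `y`. -/
lemma hasRainbowCut_of_injOn_insert_neighborSet (hxy : x ≠ y)
    (hc : Set.InjOn c (insert y (G.neighborSet x))) : G.HasRainbowCut c x y := by
  have hS : G.neighborSet x \ {y} ⊆ insert y (G.neighborSet x) :=
    Set.sdiff_subset.trans (Set.subset_insert _ _)
  refine ⟨G.neighborSet x \ {y}, fun h => G.loopless.irrefl x h.1, fun h => h.2 rfl,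
    fun hnadj => ⟨IsIsolated.not_reachable ?_ hxy, hc.mono hS⟩,
    fun _ => ⟨IsIsolated.not_reachable ?_ hxy, .inr (hc.mono ?_)⟩⟩
  · rintro z ⟨hxz, -, hz⟩
    obtain rfl : z = y := by simpa [hxz] using hz
    exact hnadj hxz
  · rintro z ⟨hxz, -, hz⟩
    rw [deleteEdges_adj] at hxz
    obtain rfl : z = y := by simpa [hxz.1] using hz
    exact hxz.2 rfl
  · rw [Set.union_singleton]
    exact Set.insert_subset_insert Set.sdiff_subset

lemma isRVDColoring_of_forall_injOn
    (h : ∀ x y, x ≠ y → Set.InjOn c (insert y (G.neighborSet x)) ∨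
      Set.InjOn c (insert x (G.neighborSet y))) :
    G.IsRVDColoring c := by
  intro x y hxy
  rcases h x y hxy with hc | hc
  exacts [hasRainbowCut_of_injOn_insert_neighborSet hxy hc,
    (hasRainbowCut_of_injOn_insert_neighborSet hxy.symm hc).symm]

/-- Two universal vertices `a, b` are joined by a path `a z b` through every other vertex `z`, so an
`a`-`b` cut contains all of `V \ {a, b}`, and its rainbow extension misses only `a` or `b`. -/
lemma IsRVDColoring.card_sub_one_le [Fintype V] [Fintype α] (hc : G.IsRVDColoring c) {a b : V}
    (hab : a ≠ b) (ha : G.IsUniversal a) (hb : G.IsUniversal b) :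
    Fintype.card V - 1 ≤ Fintype.card α := by
  classical
  obtain ⟨S, haS, hbS, -, hcut⟩ := hc a b hab
  obtain ⟨hsep, hinj⟩ := hcut (ha hab)
  have hmem : ∀ z, z ≠ a → z ≠ b → z ∈ S := by
    intro z hza hzb
    by_contra hzS
    refine hsep ((Adj.reachable (v := z) ?_).trans (Adj.reachable ?_))
    · exact ⟨⟨ha hza.symm, by simp [hzb, hab]⟩, haS, hzS⟩
    · exact ⟨⟨(hb hzb.symm).symm, by simp [hza, hzb]⟩, hzS, hbS⟩
  have key : ∀ u v, Set.InjOn c (S ∪ {u}) → (∀ z, z ≠ u → z ≠ v → z ∈ S) →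
      Fintype.card V - 1 ≤ Fintype.card α := by
    intro u v hu huv
    have hsub : ((univ.erase v : Finset V) : Set V) ⊆ S ∪ {u} := by
      intro z hz
      by_cases hzu : z = u
      · exact .inr hzu
      · exact .inl (huv z hzu (by simpa using hz))
    simpa [card_erase_of_mem] using
      card_le_card_of_injOn c (fun _ _ => mem_univ _) (hu.mono hsub)
  rcases hinj with h | h
  exacts [key a b h hmem, key b a h fun z hzb hza => hmem z hza hzb]

lemma rvd_le {k : ℕ} {c : V → Fin k} (hc : G.IsRVDColoring c) : G.rvd ≤ k :=
  Nat.sInf_le ⟨c, hc⟩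

lemma IsRVDColoring.card_sub_one_le_rvd [Fintype V] {k : ℕ} {c : V → Fin k}
    (hc : G.IsRVDColoring c) {a b : V} (hab : a ≠ b) (ha : G.IsUniversal a)
    (hb : G.IsUniversal b) : Fintype.card V - 1 ≤ G.rvd := by
  obtain ⟨c', hc'⟩ :=
    Nat.sInf_mem (⟨k, c, hc⟩ : {k | ∃ c : V → Fin k, G.IsRVDColoring c}.Nonempty)
  simpa [rvd] using hc'.card_sub_one_le hab ha hb

lemma card_edgeFinset_eq_of_induce_compl_eq_top [Fintype V] [DecidableEq V] [DecidableRel G.Adj]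
    {x : V} (h : G.induce {x}ᶜ = ⊤) :
    #G.edgeFinset = (Fintype.card V - 1).choose 2 + G.degree x := by
  have hinduce : #(G.induce {x}ᶜ).edgeFinset = (Fintype.card V - 1).choose 2 := by
    have hcard : Fintype.card ↥({x}ᶜ : Set V) = Fintype.card V - 1 := by
      rw [Fintype.card_compl_set, Set.card_singleton]
    rw [← hcard, ← card_edgeFinset_top_eq_card_choose_two]
    congr!
  rw [← hinduce, card_edgeFinset_induce_compl_singleton, card_edgeFinset_deleteIncidenceSet,
    Nat.sub_add_cancel (G.degree_le_card_edgeFinset x)]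

end SimpleGraph

lemma Fin.injOn_predAbove {n : ℕ} {p : Fin n} {s : Set (Fin (n + 1))}
    (h : p.castSucc ∉ s ∨ p.succ ∉ s) : Set.InjOn p.predAbove s := by
  intro i hi j hj hij
  have hne : ¬ (i = p.castSucc ∧ j = p.succ) ∧ ¬ (i = p.succ ∧ j = p.castSucc) := by
    rcases h with h | h <;> constructor <;> rintro ⟨rfl, rfl⟩ <;> contradiction
  simp only [Fin.ext_iff] at hne ⊢
  unfold Fin.predAbove at hij
  split_ifs at hij with hi' hj' hj' <;>
    simp only [Fin.ext_iff, Fin.val_pred, Fin.coe_castPred, Fin.lt_def, Fin.val_castSucc,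
      Fin.val_succ] at hij hi' hj' hne <;> omega

section extremalGraph

variable {m : ℕ}

@[simp] lemma extremalGraph_adj {u v : Fin (m + 3)} :
    (extremalGraph (m + 3)).Adj u v ↔
      (u : ℕ) ≠ v ∧ ¬((u = m + 2 ∧ v < m) ∨ (v = m + 2 ∧ u < m)) := by
  simp [extremalGraph, Fin.val_ne_iff]

lemma extremalGraph_isUniversal {v : Fin (m + 3)} (h₁ : m ≤ v) (h₂ : (v : ℕ) ≤ m + 1) :
    (extremalGraph (m + 3)).IsUniversal v := by
  intro w hvw
  rw [extremalGraph_adj]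
  have := Fin.val_ne_iff.mpr hvw
  omega

/-- The colouring gives the last two vertices the same colour and is injective otherwise. Each
pair has an endpoint `x` (the last vertex, one not adjacent to it, or else the second-to-last
vertex) such that `insert y (N x)` misses one of the last two vertices. -/
lemma extremalGraph_isRVDColoring :
    (extremalGraph (m + 3)).IsRVDColoring (Fin.last (m + 1)).predAbove := by
  refine isRVDColoring_of_forall_injOn fun x y hxy =>
    Or.imp Fin.injOn_predAbove Fin.injOn_predAbove ?_
  have := Fin.val_ne_iff.mpr hxy
  simp only [Set.mem_insert_iff, mem_neighborSet, extremalGraph_adj, Fin.succ_last,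
    Fin.ext_iff, Fin.val_last, Fin.val_castSucc, Nat.succ_eq_add_one, true_and]
  omega

lemma extremalGraph_induce_compl_last :
    (extremalGraph (m + 3)).induce {Fin.last (m + 2)}ᶜ = ⊤ := by
  ext ⟨u, hu⟩ ⟨v, hv⟩
  simp only [Set.mem_compl_iff, Set.mem_singleton_iff, Fin.ext_iff, Fin.val_last] at hu hv
  simp [Fin.val_ne_iff]
  omega

lemma extremalGraph_degree_last : (extremalGraph (m + 3)).degree (Fin.last (m + 2)) = 2 := by
  rw [← card_neighborFinset_eq_degree]
  convert card_pair (a := (⟨m, by omega⟩ : Fin (m + 3))) (b := ⟨m + 1, by omega⟩) (by simp)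
  ext v
  simp [Fin.ext_iff]
  omega

lemma extremalGraph_card_edgeFinset :
    #(extremalGraph (m + 3)).edgeFinset = (m + 2).choose 2 + 2 := by
  rw [card_edgeFinset_eq_of_induce_compl_eq_top extremalGraph_induce_compl_last,
    extremalGraph_degree_last, Fintype.card_fin]
  rfl

end extremalGraph

/-- For `n ≥ 3`, the graph `H` obtained from `K_n` by deleting the edges
`v_n v_i`, `i ∈ {1, …, n-3}`, is connected, has `rvd(H) = n - 1` and has
exactly `n(n-1)/2 - n + 3` edges; hence the bound on the size of connected
graphs of order `n ≥ 3` with `rvd = n - 1` is attained. -/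
theorem extremalGraph_attains_bound (n : ℕ) (hn : 3 ≤ n) :
    (extremalGraph n).Connected ∧ (extremalGraph n).rvd = n - 1 ∧
      (extremalGraph n).edgeFinset.card = n * (n - 1) / 2 - n + 3 := by
  obtain ⟨m, rfl⟩ : ∃ m, n = m + 3 := ⟨n - 3, by omega⟩
  have ha := extremalGraph_isUniversal (v := (⟨m, by omega⟩ : Fin (m + 3))) le_rfl (by simp)
  have hb := extremalGraph_isUniversal (v := (⟨m + 1, by omega⟩ : Fin (m + 3))) (by simp) le_rfl
  refine ⟨.of_isUniversal ha, le_antisymm ?_ ?_, ?_⟩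
  · exact rvd_le extremalGraph_isRVDColoring
  · simpa using extremalGraph_isRVDColoring.card_sub_one_le_rvd (by simp [Fin.ext_iff]) ha hb
  · have hchoose : (m + 3).choose 2 = m + 2 + (m + 2).choose 2 := by
      rw [Nat.choose_succ_succ', Nat.choose_one_right]
    have hpos := Nat.choose_pos (show 2 ≤ m + 2 by omega)
    rw [extremalGraph_card_edgeFinset, ← Nat.choose_two_right]
    omega
end

section
/- Let G be a connected simple graph of order n ≥ 4 whose complement Ḡ is also connected. Then n−7 ≤ rvd(G) + rvd(Ḡ) ≤ 2n. -/
open SimpleGraph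

/-!
Every `x`–`y` cut contains all common neighbours of `x` and `y`. Hence in a colouring of `G` with
`k` colours two vertices have at most `k` common neighbours (`k - 1` if adjacent), and two
vertices of the same colour have at most one common neighbour: otherwise the rainbow cut
between two of their common neighbours would contain both of them. Write `K = k + k'`, where
`k'` colours are used on `Gᶜ`. For each pair, its common neighbours in `G` and in `Gᶜ` plus one
number at most `K`, while by convexity of `d ↦ d²` at each vertex they average at least
`(n - 1) / 2` over the ordered pairs; so `n - 1 ≤ 2K`.

Suppose `K ≤ n - 8`; by symmetry `n ≥ 2k + 4`, so `G` has two disjoint monochromatic triples.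
At most `12` vertices lie in a triple or see two vertices of one, and any two other vertices
have a common non-neighbour in each triple, so they get different colours in `Gᶜ`: `k' ≥ n - 12`
and `k ≤ 4`. Likewise two vertices of degree `< (n - 3) / 2` have two common neighbours in `Gᶜ`,
so more than `2k` vertices have degree `≥ (n - 3) / 2`, three of them share a colour, and
inclusion–exclusion on their neighbourhoods gives `n ≤ 15`. Thus `n = 15` and `K = 7`, and the
count becomes strict at a pair of equal colour in `Gᶜ`, which exists since `k' < n`.
-/

open Finset

theorem Set.InjOn.card_le_of_fin {V : Type*} {k : ℕ} {c : V → Fin k} {s : Finset V}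
    (h : Set.InjOn c s) : #s ≤ k := by
  simpa using Finset.card_le_card_of_injOn (t := Finset.univ) c (fun _ _ => Finset.mem_univ _) h

theorem Finset.card_add_card_add_card_le {α : Type*} [DecidableEq α] (A B C : Finset α) :
    #A + #B + #C ≤ #(A ∪ B ∪ C) + #(A ∩ B) + #(A ∩ C) + #(B ∩ C) := by
  have := card_union_add_card_inter A B
  have := card_union_add_card_inter (A ∪ B) C
  have : #((A ∪ B) ∩ C) ≤ #(A ∩ C) + #(B ∩ C) := by
    rw [union_inter_distrib_right]
    exact card_union_le _ _
  omega

theorem exists_monochromatic_triple {V : Type*} {k : ℕ} (c : V → Fin k) {s : Finset V}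
    (hs : 2 * k < #s) : ∃ τ ⊆ s, #τ = 3 ∧ ∀ x ∈ τ, ∀ y ∈ τ, c x = c y := by
  obtain ⟨i, -, hi⟩ := exists_lt_card_fiber_of_mul_lt_card_of_maps_to (f := c) (t := univ)
    (fun _ _ => mem_univ _) (by simpa [mul_comm] using hs)
  obtain ⟨τ, hτ, hcard⟩ := exists_subset_card_eq hi
  exact ⟨τ, hτ.trans (filter_subset _ _), hcard,
    fun x hx y hy => (mem_filter.1 (hτ hx)).2.trans (mem_filter.1 (hτ hy)).2.symm⟩

namespace SimpleGraph

variable {V α : Type*}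

section Cuts

variable {H : SimpleGraph V} {S : Set V} {x y z : V}

theorem mem_of_not_reachable_delVerts (h : ¬(H.delVerts S).Reachable x y) (hx : x ∉ S)
    (hy : y ∉ S) (hxz : H.Adj x z) (hzy : H.Adj z y) : z ∈ S := by
  by_contra hz
  have hxz' : (H.delVerts S).Adj x z := ⟨hxz, hx, hz⟩
  have hzy' : (H.delVerts S).Adj z y := ⟨hzy, hz, hy⟩
  exact h (hxz'.reachable.trans hzy'.reachable)

theorem not_reachable_delVerts_setOf_ne_ne (hxy : x ≠ y) (h : ¬H.Adj x y) :
    ¬(H.delVerts {z | z ≠ x ∧ z ≠ y}).Reachable x y := by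
  rintro ⟨_ | ⟨⟨hxv, -, hv⟩, -⟩⟩
  · exact hxy rfl
  · simp only [Set.mem_ofPred_eq, not_and_or, not_not] at hv
    rcases hv with rfl | rfl
    exacts [H.loopless.irrefl _ hxv, h hxv]

end Cuts

namespace IsRVDColoring

variable {G : SimpleGraph V} {c : V → α}

theorem of_injective (hc : Function.Injective c) : G.IsRVDColoring c := fun x y hxy =>
  ⟨{z | z ≠ x ∧ z ≠ y}, by simp, by simp [hxy.symm],
    fun h => ⟨not_reachable_delVerts_setOf_ne_ne hxy h, hc.injOn⟩,
    fun _ => ⟨not_reachable_delVerts_setOf_ne_ne hxy (by simp), .inl hc.injOn⟩⟩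

theorem exists_commonNeighbors_subset_rainbow (hc : G.IsRVDColoring c) {u v : V} (huv : u ≠ v) :
    ∃ S : Set V, G.commonNeighbors u v ⊆ S ∧ Set.InjOn c S ∧
      (G.Adj u v → Set.InjOn c (S ∪ {u}) ∨ Set.InjOn c (S ∪ {v})) := by
  obtain ⟨S, hu, hv, hnonadj, hadj⟩ := hc u v huv
  by_cases huv' : G.Adj u v
  · obtain ⟨hcut, hrainbow⟩ := hadj huv'
    refine ⟨S, fun z hz => ?_, ?_, fun _ => hrainbow⟩
    · rw [mem_commonNeighbors] at hz
      refine mem_of_not_reachable_delVerts hcut hu hv ?_ ?_ <;> rw [deleteEdges_adj] <;>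
        simp [hz.1, hz.2.symm, hz.1.ne', hz.2.ne']
    · rcases hrainbow with h | h <;> exact h.mono Set.subset_union_left
  · obtain ⟨hcut, hrainbow⟩ := hnonadj huv'
    refine ⟨S, fun z hz => ?_, hrainbow, fun h => absurd h huv'⟩
    rw [mem_commonNeighbors] at hz
    exact mem_of_not_reachable_delVerts hcut hu hv hz.1 hz.2.symm

end IsRVDColoring

section Fintype

variable [Fintype V]

theorem isRVDColoring_equivFin (G : SimpleGraph V) : G.IsRVDColoring (Fintype.equivFin V) :=
  .of_injective (Fintype.equivFin V).injective

theorem rvd_le_card (G : SimpleGraph V) : G.rvd ≤ Fintype.card V :=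
  Nat.sInf_le ⟨_, G.isRVDColoring_equivFin⟩

theorem exists_isRVDColoring_fin_rvd (G : SimpleGraph V) :
    ∃ c : V → Fin G.rvd, G.IsRVDColoring c :=
  Nat.sInf_mem (s := {k | ∃ c : V → Fin k, G.IsRVDColoring c})
    ⟨_, _, G.isRVDColoring_equivFin⟩

end Fintype

variable [Fintype V] [DecidableEq V]

theorem card_le_card_add_of_forall_mem_or_mem {k : ℕ} (c : V → Fin k) {B : Finset V}
    (h : ∀ a b, a ≠ b → c a = c b → a ∈ B ∨ b ∈ B) : Fintype.card V ≤ #B + k := by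
  have hinj : Set.InjOn c ↑Bᶜ := fun a ha b hb hab => by
    by_contra hne
    simp only [coe_compl, Set.mem_compl_iff, mem_coe] at ha hb
    exact (h a b hne hab).elim ha hb
  have := hinj.card_le_of_fin
  have := card_add_card_compl B
  omega

section Counting

variable (G : SimpleGraph V) [DecidableRel G.Adj]

theorem sum_card_common_eq_sum_card_offDiag :
    ∑ p ∈ univ.offDiag, #(G.neighborFinset p.1 ∩ G.neighborFinset p.2) =
      ∑ z, #(G.neighborFinset z).offDiag := by
  convert sum_card_bipartiteAbove_eq_sum_card_bipartiteBelow (s := (univ : Finset V).offDiag)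
    (t := univ) (r := fun p z => G.Adj p.1 z ∧ G.Adj p.2 z) using 3 with p - z -
  · ext; simp [bipartiteAbove]
  · ext; simp [bipartiteBelow, adj_comm]
    tauto

theorem sq_card_sub_one_le (z : V) :
    (Fintype.card V - 1) ^ 2 ≤ 2 * (#(G.neighborFinset z).offDiag +
      #(Gᶜ.neighborFinset z).offDiag + (Fintype.card V - 1)) := by
  have hsum : G.degree z + Gᶜ.degree z = Fintype.card V - 1 := by
    have := G.degree_lt_card_verts z
    rw [degree_compl]
    omega
  rw [offDiag_card, offDiag_card, card_neighborFinset_eq_degree, card_neighborFinset_eq_degree,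
    ← hsum]
  generalize G.degree z = d, Gᶜ.degree z = e
  have := Nat.le_mul_self d
  have := Nat.le_mul_self e
  zify [*]
  nlinarith [sq_nonneg ((d : ℤ) - e)]

theorem card_mul_sq_le_two_mul_sum :
    Fintype.card V * (Fintype.card V - 1) ^ 2 ≤ 2 * ∑ p ∈ univ.offDiag,
      (#(G.neighborFinset p.1 ∩ G.neighborFinset p.2) +
        #(Gᶜ.neighborFinset p.1 ∩ Gᶜ.neighborFinset p.2) + 1) := by
  have hoff : #(univ : Finset V).offDiag = ∑ _z : V, (Fintype.card V - 1) := by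
    simp [offDiag_card, Nat.mul_sub_one]
  rw [sum_add_distrib, sum_add_distrib, sum_card_common_eq_sum_card_offDiag,
    sum_card_common_eq_sum_card_offDiag, sum_const, smul_eq_mul, mul_one, hoff,
    ← sum_add_distrib, ← sum_add_distrib, mul_sum]
  calc Fintype.card V * (Fintype.card V - 1) ^ 2 = ∑ _z : V, (Fintype.card V - 1) ^ 2 := by simp
    _ ≤ _ := sum_le_sum fun z _ => G.sq_card_sub_one_le z

variable {G} {m : ℕ}

theorem card_sub_one_le_two_mul_of_forall_lt
    (h : ∀ u v, u ≠ v → #(G.neighborFinset u ∩ G.neighborFinset v) +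
      #(Gᶜ.neighborFinset u ∩ Gᶜ.neighborFinset v) < m) :
    Fintype.card V - 1 ≤ 2 * m := by
  set n := Fintype.card V
  obtain hn | hn := Nat.lt_or_ge n 2
  · omega
  refine Nat.le_of_mul_le_mul_left ?_ (Nat.mul_pos (by omega : 0 < n) (by omega : 0 < n - 1))
  calc n * (n - 1) * (n - 1) = n * (n - 1) ^ 2 := by ring
    _ ≤ _ := G.card_mul_sq_le_two_mul_sum
    _ ≤ 2 * ∑ _p ∈ (univ : Finset V).offDiag, m := by
      gcongr with p hp
      exact h _ _ (mem_offDiag.1 hp).2.2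
    _ = n * (n - 1) * (2 * m) := by simp [offDiag_card, n, Nat.mul_sub_one]; ring

theorem card_sub_one_lt_two_mul_of_forall_lt_of_exists
    (h : ∀ u v, u ≠ v → #(G.neighborFinset u ∩ G.neighborFinset v) +
      #(Gᶜ.neighborFinset u ∩ Gᶜ.neighborFinset v) < m)
    (h' : ∃ u v, u ≠ v ∧ #(G.neighborFinset u ∩ G.neighborFinset v) +
      #(Gᶜ.neighborFinset u ∩ Gᶜ.neighborFinset v) + 1 < m) :
    Fintype.card V - 1 < 2 * m := by
  set n := Fintype.card V
  obtain ⟨u, v, huv, huv'⟩ := h'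
  refine Nat.lt_of_mul_lt_mul_left (a := n * (n - 1)) ?_
  calc n * (n - 1) * (n - 1) = n * (n - 1) ^ 2 := by ring
    _ ≤ _ := G.card_mul_sq_le_two_mul_sum
    _ < 2 * ∑ _p ∈ (univ : Finset V).offDiag, m := by
      have := sum_lt_sum (s := (univ : Finset V).offDiag)
        (fun p hp => Nat.add_one_le_iff.2 (h _ _ (mem_offDiag.1 hp).2.2))
        ⟨(u, v), by simp [huv], huv'⟩
      omega
    _ = n * (n - 1) * (2 * m) := by simp [offDiag_card, n, Nat.mul_sub_one]; ring

end Counting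

variable {G : SimpleGraph V} [DecidableRel G.Adj]

theorem exists_mem_compl_common {τ : Finset V} {a b : V} (ha : a ∉ τ) (hb : b ∉ τ)
    (h : #(G.neighborFinset a ∩ τ) + #(G.neighborFinset b ∩ τ) < #τ) :
    ∃ m ∈ τ, m ∈ Gᶜ.neighborFinset a ∩ Gᶜ.neighborFinset b := by
  have : #((G.neighborFinset a ∪ G.neighborFinset b) ∩ τ) < #τ := by
    rw [union_inter_distrib_right]
    exact (card_union_le _ _).trans_lt h
  obtain ⟨m, hmτ, hm⟩ := exists_mem_notMem_of_card_lt_card this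
  simp only [mem_inter, mem_union, mem_neighborFinset, hmτ, and_true, not_or] at hm
  refine ⟨m, hmτ, ?_⟩
  simp only [mem_inter, mem_neighborFinset, compl_adj]
  exact ⟨⟨fun h => ha (h ▸ hmτ), hm.1⟩, fun h => hb (h ▸ hmτ), hm.2⟩

theorem two_le_card_compl_common {a b : V} (ha : 2 * G.degree a + 4 ≤ Fintype.card V)
    (hb : 2 * G.degree b + 4 ≤ Fintype.card V) :
    2 ≤ #(Gᶜ.neighborFinset a ∩ Gᶜ.neighborFinset b) := by
  have := card_union_add_card_inter (Gᶜ.neighborFinset a) (Gᶜ.neighborFinset b)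
  have := card_le_univ (Gᶜ.neighborFinset a ∪ Gᶜ.neighborFinset b)
  rw [card_neighborFinset_eq_degree, card_neighborFinset_eq_degree, degree_compl,
    degree_compl] at *
  omega

namespace IsRVDColoring

section Monochromatic

variable {c : V → α} {u v : V}

theorem card_common_le_one_of_eq (hc : G.IsRVDColoring c) (huv : u ≠ v)
    (hcuv : c u = c v) : #(G.neighborFinset u ∩ G.neighborFinset v) ≤ 1 := by
  by_contra! h
  obtain ⟨z₁, hz₁, z₂, hz₂, hz⟩ := one_lt_card.1 h
  simp only [mem_inter, mem_neighborFinset] at hz₁ hz₂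
  obtain ⟨S, hS, hinj, -⟩ := hc.exists_commonNeighbors_subset_rainbow hz
  exact huv (hinj (hS ⟨hz₁.1.symm, hz₂.1.symm⟩) (hS ⟨hz₁.2.symm, hz₂.2.symm⟩) hcuv)

theorem card_filter_two_le_card_inter_le_three (hc : G.IsRVDColoring c) {τ : Finset V}
    (hτ : #τ = 3) (hmono : ∀ x ∈ τ, ∀ y ∈ τ, c x = c y) :
    #{w | 2 ≤ #(G.neighborFinset w ∩ τ)} ≤ 3 := by
  obtain ⟨x, y, z, hxy, hxz, hyz, rfl⟩ := card_eq_three.1 hτ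
  set A := G.neighborFinset x ∩ G.neighborFinset y
  set B := G.neighborFinset x ∩ G.neighborFinset z
  set C := G.neighborFinset y ∩ G.neighborFinset z
  have hsub : ({w | 2 ≤ #(G.neighborFinset w ∩ {x, y, z})} : Finset V) ⊆ A ∪ B ∪ C := by
    intro w hw
    obtain ⟨p, hp, q, hq, hpq⟩ := one_lt_card.1 (mem_filter.1 hw).2
    simp only [mem_inter, mem_neighborFinset, mem_insert, mem_singleton] at hp hq
    simp only [A, B, C, mem_union, mem_inter, mem_neighborFinset]
    obtain ⟨hwp, hp⟩ := hp
    obtain ⟨hwq, hq⟩ := hq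
    have := hwp.symm
    have := hwq.symm
    rcases hp with rfl | rfl | rfl <;> rcases hq with rfl | rfl | rfl <;>
      first | exact absurd rfl hpq | tauto
  have := card_le_card hsub
  have := card_union_le (A ∪ B) C
  have := card_union_le A B
  have hA : #A ≤ 1 := hc.card_common_le_one_of_eq hxy (hmono x (by simp) y (by simp))
  have hB : #B ≤ 1 := hc.card_common_le_one_of_eq hxz (hmono x (by simp) z (by simp))
  have hC : #C ≤ 1 := hc.card_common_le_one_of_eq hyz (hmono y (by simp) z (by simp))
  omega

theorem degree_add_degree_add_degree_le (hc : G.IsRVDColoring c) {x y z : V} (hxy : x ≠ y)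
    (hxz : x ≠ z) (hyz : y ≠ z) (hcxy : c x = c y) (hcxz : c x = c z) :
    G.degree x + G.degree y + G.degree z ≤ Fintype.card V + 3 := by
  have := card_add_card_add_card_le (G.neighborFinset x) (G.neighborFinset y)
    (G.neighborFinset z)
  have := card_le_univ (G.neighborFinset x ∪ G.neighborFinset y ∪ G.neighborFinset z)
  have := hc.card_common_le_one_of_eq hxy hcxy
  have := hc.card_common_le_one_of_eq hxz hcxz
  have := hc.card_common_le_one_of_eq hyz (hcxy.symm.trans hcxz)
  simp only [card_neighborFinset_eq_degree] at *
  omega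

end Monochromatic

variable {k k' : ℕ} {c : V → Fin k} {c' : V → Fin k'} {u v : V}

theorem card_common_le (hc : G.IsRVDColoring c) (huv : u ≠ v) :
    #(G.neighborFinset u ∩ G.neighborFinset v) ≤ k := by
  obtain ⟨S, hS, hinj, -⟩ := hc.exists_commonNeighbors_subset_rainbow huv
  exact (hinj.mono fun z hz => hS (G.mem_commonNeighbors.2 (by simpa using hz))).card_le_of_fin

theorem card_common_lt_of_adj (hc : G.IsRVDColoring c) (huv : G.Adj u v) :
    #(G.neighborFinset u ∩ G.neighborFinset v) < k := by
  obtain ⟨S, hS, -, hinj⟩ := hc.exists_commonNeighbors_subset_rainbow huv.ne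
  set T := G.neighborFinset u ∩ G.neighborFinset v
  have hTS : (T : Set V) ⊆ S := fun z hz => hS (G.mem_commonNeighbors.2 (by simpa [T] using hz))
  have key : ∀ w ∉ T, Set.InjOn c (S ∪ {w}) → #T < k := fun w hw h => by
    have hsub : (↑(insert w T) : Set V) ⊆ S ∪ {w} := by
      rw [coe_insert]
      exact Set.insert_subset (.inr rfl) (hTS.trans Set.subset_union_left)
    simpa [card_insert_of_notMem hw] using (h.mono hsub).card_le_of_fin
  rcases hinj huv with h | h
  exacts [key u (by simp [T]) h, key v (by simp [T]) h]

theorem card_common_add_card_compl_common_lt (hc : G.IsRVDColoring c)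
    (hc' : Gᶜ.IsRVDColoring c') (huv : u ≠ v) :
    #(G.neighborFinset u ∩ G.neighborFinset v) +
      #(Gᶜ.neighborFinset u ∩ Gᶜ.neighborFinset v) < k + k' := by
  by_cases h : G.Adj u v
  · have := hc.card_common_lt_of_adj h
    have := hc'.card_common_le huv
    omega
  · have := hc.card_common_le huv
    have := hc'.card_common_lt_of_adj ⟨huv, h⟩
    omega

theorem card_sub_one_le_two_mul_add (hc : G.IsRVDColoring c) (hc' : Gᶜ.IsRVDColoring c') :
    Fintype.card V - 1 ≤ 2 * (k + k') :=
  card_sub_one_le_two_mul_of_forall_lt fun _ _ => hc.card_common_add_card_compl_common_lt hc'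

theorem card_le_two_mul_add (hc : G.IsRVDColoring c) (hc' : Gᶜ.IsRVDColoring c')
    (hk' : 3 ≤ k') (hlt : k' < Fintype.card V) : Fintype.card V ≤ 2 * (k + k') := by
  obtain ⟨u, v, huv, hcuv⟩ := Fintype.exists_ne_map_eq_of_card_lt c' (by simpa using hlt)
  have := hc.card_common_le huv
  have := hc'.card_common_le_one_of_eq huv hcuv
  have := card_sub_one_lt_two_mul_of_forall_lt_of_exists
    (fun _ _ => hc.card_common_add_card_compl_common_lt hc') ⟨u, v, huv, by omega⟩
  omega

theorem card_le_twelve_add (hc : G.IsRVDColoring c) (hc' : Gᶜ.IsRVDColoring c')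
    {τ₁ τ₂ : Finset V} (h₁ : #τ₁ = 3) (h₂ : #τ₂ = 3) (hdisj : Disjoint τ₁ τ₂)
    (hm₁ : ∀ x ∈ τ₁, ∀ y ∈ τ₁, c x = c y) (hm₂ : ∀ x ∈ τ₂, ∀ y ∈ τ₂, c x = c y) :
    Fintype.card V ≤ 12 + k' := by
  set U : Finset V → Finset V := fun τ => {w | 2 ≤ #(G.neighborFinset w ∩ τ)}
  have hB : #(τ₁ ∪ τ₂ ∪ U τ₁ ∪ U τ₂) ≤ 12 := by
    have : #(U τ₁) ≤ 3 := hc.card_filter_two_le_card_inter_le_three h₁ hm₁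
    have : #(U τ₂) ≤ 3 := hc.card_filter_two_le_card_inter_le_three h₂ hm₂
    grw [card_union_le, card_union_le, card_union_le]
    omega
  refine (card_le_card_add_of_forall_mem_or_mem c' (B := τ₁ ∪ τ₂ ∪ U τ₁ ∪ U τ₂)
    fun a b hab hcab => ?_).trans (by omega)
  by_contra! h
  simp only [U, mem_union, mem_filter, mem_univ, true_and, not_or, not_le] at h
  obtain ⟨⟨⟨⟨ha₁, ha₂⟩, ha₁'⟩, ha₂'⟩, ⟨⟨⟨hb₁, hb₂⟩, hb₁'⟩, hb₂'⟩⟩ := h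
  obtain ⟨m₁, hm₁τ, hm₁ab⟩ := exists_mem_compl_common (G := G) ha₁ hb₁ (by omega)
  obtain ⟨m₂, hm₂τ, hm₂ab⟩ := exists_mem_compl_common (G := G) ha₂ hb₂ (by omega)
  have : 1 < #(Gᶜ.neighborFinset a ∩ Gᶜ.neighborFinset b) :=
    one_lt_card.2 ⟨m₁, hm₁ab, m₂, hm₂ab, fun h => Finset.disjoint_left.1 hdisj hm₁τ (h ▸ hm₂τ)⟩
  have := hc'.card_common_le_one_of_eq hab hcab
  omega

theorem card_le_add_add_seven_of_two_mul_add_four_le (hc : G.IsRVDColoring c)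
    (hc' : Gᶜ.IsRVDColoring c') (hk : 2 * k + 4 ≤ Fintype.card V) :
    Fintype.card V ≤ k + k' + 7 := by
  set n := Fintype.card V
  by_contra! hK
  obtain ⟨τ₁, -, h₁, hm₁⟩ := exists_monochromatic_triple c (s := univ) (by simp; omega)
  obtain ⟨τ₂, hτ₂, h₂, hm₂⟩ := exists_monochromatic_triple c (s := τ₁ᶜ)
    (by rw [card_compl]; omega)
  have h₁₂ : n ≤ 12 + k' := hc.card_le_twelve_add hc' h₁ h₂
    (Finset.disjoint_right.2 fun _ hx => mem_compl.1 (hτ₂ hx)) hm₁ hm₂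
  set H : Finset V := {x | n ≤ 2 * G.degree x + 3}
  have hH : n ≤ #H + k' := card_le_card_add_of_forall_mem_or_mem c' fun a b hab hcab => by
    by_contra! h
    simp only [H, mem_filter, mem_univ, true_and, not_le] at h
    have := two_le_card_compl_common (G := G) (a := a) (b := b) (by omega) (by omega)
    have := hc'.card_common_le_one_of_eq hab hcab
    omega
  obtain ⟨τ, hτH, hτ, hmτ⟩ := exists_monochromatic_triple c (s := H) (by omega)
  obtain ⟨x, y, z, hxy, hxz, hyz, rfl⟩ := card_eq_three.1 hτ
  have hdeg : ∀ w ∈ ({x, y, z} : Finset V), n ≤ 2 * G.degree w + 3 := fun w hw =>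
    (mem_filter.1 (hτH hw)).2
  have := hdeg x (by simp)
  have := hdeg y (by simp)
  have := hdeg z (by simp)
  have := hc.degree_add_degree_add_degree_le hxy hxz hyz (hmτ x (by simp) y (by simp))
    (hmτ x (by simp) z (by simp))
  have := hc.card_sub_one_le_two_mul_add hc'
  -- so far `k ≤ 4`, `n ≤ 15` and `n - 1 ≤ 2 (k + k') ≤ 2 (n - 8)`: `n = 15` and `k' = 7 - k ≥ 3`
  have := hc.card_le_two_mul_add hc' (by omega) (by omega)
  omega

theorem card_le_add_add_seven (hc : G.IsRVDColoring c) (hc' : Gᶜ.IsRVDColoring c') :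
    Fintype.card V ≤ k + k' + 7 := by
  by_cases hk : 2 * k + 4 ≤ Fintype.card V
  · exact hc.card_le_add_add_seven_of_two_mul_add_four_le hc' hk
  by_cases hk' : 2 * k' + 4 ≤ Fintype.card V
  · rw [← compl_compl G] at hc
    have := hc'.card_le_add_add_seven_of_two_mul_add_four_le hc hk'
    omega
  omega

end IsRVDColoring

end SimpleGraph

theorem rvd_add_rvd_compl_general {V : Type*} [Fintype V] (G : SimpleGraph V) :
    (Fintype.card V : ℤ) - 7 ≤ (G.rvd : ℤ) + Gᶜ.rvd ∧
      (G.rvd : ℤ) + Gᶜ.rvd ≤ 2 * Fintype.card V := by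
  classical
  obtain ⟨c, hc⟩ := G.exists_isRVDColoring_fin_rvd
  obtain ⟨c', hc'⟩ := Gᶜ.exists_isRVDColoring_fin_rvd
  have := hc.card_le_add_add_seven hc'
  have := G.rvd_le_card
  have := Gᶜ.rvd_le_card
  omega

/-- For connected graphs `G` of order `n ≥ 4` whose complement is also
connected, `n - 7 ≤ rvd(G) + rvd(Ḡ) ≤ 2n`. -/
theorem rvd_add_rvd_compl {V : Type*} [Fintype V] (G : SimpleGraph V)
    (hG : G.Connected) (hGc : Gᶜ.Connected) (hn : 4 ≤ Fintype.card V) :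
    (Fintype.card V : ℤ) - 7 ≤ (G.rvd : ℤ) + Gᶜ.rvd ∧
      (G.rvd : ℤ) + Gᶜ.rvd ≤ 2 * Fintype.card V :=
  rvd_add_rvd_compl_general G
end
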